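/- arXiv:2006.08090 — 2 statements merged into one kernel-verified Lean document; each statement's English description precedes it below -/
import Mathlib

section
/- For every n ∈ ℕ, the countable family of operators {M^{(n)}_{x,y} : x, y ∈ ℤ^d} on ℓ²(ℤ^d) ⊗ H satisfies ∑_{x,y ∈ ℤ^d} (M^{(n)}_{x,y})* M^{(n)}_{x,y} = I, where the series converges in the strong operator topology and I is the identity operator on ℓ²(ℤ^d) ⊗ H. -/
/- Common setup: quantum Bernoulli noises on `ℋ = ℓ²(Γ)`, `Γ` = finite subsets of `ℕ`. -/

noncomputable section

open ContinuousLinearMap Filter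

/-- The space `ℋ = ℓ²(Γ)` of square-integrable Bernoulli functionals,
where `Γ` is the set of finite subsets of `ℕ`. -/
abbrev ℋ : Type := lp (fun _ : Finset ℕ => ℂ) 2

/-- The canonical orthonormal basis `{Z_σ : σ ∈ Γ}` of `ℋ`. -/
def Z (σ : Finset ℕ) : ℋ := lp.single 2 σ 1

/-- `QBN a` says that `a k` is the annihilation operator `∂_k` acting on Bernoulli
functionals: `∂_k Z_σ = 1_σ(k) Z_{σ\k}` and `∂_k* Z_σ = (1 - 1_σ(k)) Z_{σ∪k}`. -/
def QBN (a : ℕ → ℋ →L[ℂ] ℋ) : Prop :=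
  (∀ (k : ℕ) (σ : Finset ℕ), a k (Z σ) = if k ∈ σ then Z (σ.erase k) else 0) ∧
  (∀ (k : ℕ) (σ : Finset ℕ), adjoint (a k) (Z σ) = if k ∈ σ then 0 else Z (insert k σ))

/-- `L_n = (∂_n* + ∂_n - I)/2`. -/
def Lop (a : ℕ → ℋ →L[ℂ] ℋ) (n : ℕ) : ℋ →L[ℂ] ℋ := (2 : ℂ)⁻¹ • (adjoint (a n) + a n - 1)

/-- `R_n = (∂_n* + ∂_n + I)/2`. -/
def Rop (a : ℕ → ℋ →L[ℂ] ℋ) (n : ℕ) : ℋ →L[ℂ] ℋ := (2 : ℂ)⁻¹ • (adjoint (a n) + a n + 1)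

/-- `Λ = {-1, 1} ⊆ ℤ`. -/
def Lam : Finset ℤ := {-1, 1}

/-- `Λ^d`, as a finite set of vectors in `ℤ^d`. -/
def LamD (d : ℕ) : Finset (Fin d → ℤ) := Fintype.piFinset fun _ => Lam

/-- `B_n^{(ε)}`: equals `L_n` if `ε = -1` and `R_n` if `ε = +1`. -/
def Bop (a : ℕ → ℋ →L[ℂ] ℋ) (n : ℕ) (e : ℤ) : ℋ →L[ℂ] ℋ :=
  if e = -1 then Lop a n else Rop a n

/-- A characterization of the `d`-fold Hilbert-space tensor power of `Hs`:
`tpv` is the multilinear map `(u_1, …, u_d) ↦ u_1 ⊗ ⋯ ⊗ u_d`, which satisfies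
`⟪⊗u_j, ⊗v_j⟫ = ∏ ⟪u_j, v_j⟫` and has dense span, and `tp` sends a `d`-tuple of bounded
operators to their tensor product operator, i.e. `(⊗A_j)(⊗u_j) = ⊗(A_j u_j)`. -/
def IsTensorD {Hs : Type} [NormedAddCommGroup Hs] [InnerProductSpace ℂ Hs]
    {d : ℕ} {Hd : Type} [NormedAddCommGroup Hd] [InnerProductSpace ℂ Hd]
    (tpv : MultilinearMap ℂ (fun _ : Fin d => Hs) Hd)
    (tp : (Fin d → Hs →L[ℂ] Hs) → (Hd →L[ℂ] Hd)) : Prop :=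
  (∀ u v : Fin d → Hs, (@inner ℂ _ _ (tpv u) (tpv v)) = ∏ j, (@inner ℂ _ _ (u j) (v j))) ∧
  ((Submodule.span ℂ (Set.range fun u => tpv u)).topologicalClosure = ⊤) ∧
  (∀ (A : Fin d → Hs →L[ℂ] Hs) (u : Fin d → Hs), tp A (tpv u) = tpv fun j => A j (u j))

/-- Conjugation of an operator by a unitary isomorphism `K`: `T ↦ K T K⁻¹`. -/
def conjK {Hs Hd : Type} [NormedAddCommGroup Hs] [InnerProductSpace ℂ Hs]
    [NormedAddCommGroup Hd] [InnerProductSpace ℂ Hd]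
    (K : Hd ≃ₗᵢ[ℂ] Hs) (T : Hd →L[ℂ] Hd) : Hs →L[ℂ] Hs :=
  K.toLinearIsometry.toContinuousLinearMap ∘L T ∘L K.symm.toLinearIsometry.toContinuousLinearMap

/-- `C_n^{(ε)} = K (B_n^{(ε_1)} ⊗ ⋯ ⊗ B_n^{(ε_d)}) K⁻¹` for `ε ∈ Λ^d`. -/
def Cop {d : ℕ} {Hd : Type} [NormedAddCommGroup Hd] [InnerProductSpace ℂ Hd]
    (a : ℕ → ℋ →L[ℂ] ℋ) (tp : (Fin d → ℋ →L[ℂ] ℋ) → (Hd →L[ℂ] Hd))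
    (K : Hd ≃ₗᵢ[ℂ] ℋ) (n : ℕ) (v : Fin d → ℤ) : ℋ →L[ℂ] ℋ :=
  conjK K (tp fun j => Bop a n (v j))

/-- The trace of an operator computed relative to an orthonormal basis `b`:
`Tr T = ∑_i Re ⟪b i, T (b i)⟫` (for positive operators this is the genuine trace). -/
def trB {E : Type} [NormedAddCommGroup E] [InnerProductSpace ℂ E] {ι : Type}
    (b : ι → E) (T : E →L[ℂ] E) : ℝ :=
  ∑' i, (@inner ℂ _ _ (b i) (T (b i))).re

/-- Finiteness (summability) of the trace of `T` relative to the orthonormal basis `b`;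
for a positive operator `T` this says exactly that `T` is of trace class. -/
def HasFiniteTrace {E : Type} [NormedAddCommGroup E] [InnerProductSpace ℂ E] {ι : Type}
    (b : ι → E) (T : E →L[ℂ] E) : Prop :=
  Summable fun i => (@inner ℂ _ _ (b i) (T (b i))).re

/-- The trace on `ℋ`, computed in the canonical ONB `{Z_σ}`. -/
def trH : (ℋ →L[ℂ] ℋ) → ℝ := trB Z

/-- A nucleus with site space `X` on a Hilbert space with orthonormal basis `b`: a family of
positive trace-class operators `ω x` with `∑_x Tr[ω x] = 1`. -/
def IsNucleusOn {E : Type} [NormedAddCommGroup E] [InnerProductSpace ℂ E] [CompleteSpace E]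
    {ι X : Type} (b : ι → E) (ω : X → E →L[ℂ] E) : Prop :=
  (∀ x, (ω x).IsPositive) ∧ (∀ x, HasFiniteTrace b (ω x)) ∧ HasSum (fun x => trB b (ω x)) 1

/-- The one-dimensional map `𝔍_n`: `(𝔍_n ρ)(x) = L_n ρ(x+1) L_n + R_n ρ(x-1) R_n`. -/
def Jmap1 (a : ℕ → ℋ →L[ℂ] ℋ) (n : ℕ) (ρ : ℤ → ℋ →L[ℂ] ℋ) : ℤ → ℋ →L[ℂ] ℋ :=
  fun x => Lop a n * ρ (x + 1) * Lop a n + Rop a n * ρ (x - 1) * Rop a n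

/-- The `d`-dimensional map `𝔍_n^{(d)}`:
`(𝔍_n^{(d)} ω)(x) = ∑_{ε ∈ Λ^d} C_n^{(ε)} ω(x-ε) C_n^{(ε)}`. -/
def JmapD {d : ℕ} {Hd : Type} [NormedAddCommGroup Hd] [InnerProductSpace ℂ Hd]
    (a : ℕ → ℋ →L[ℂ] ℋ) (tp : (Fin d → ℋ →L[ℂ] ℋ) → (Hd →L[ℂ] Hd)) (K : Hd ≃ₗᵢ[ℂ] ℋ)
    (n : ℕ) (ω : (Fin d → ℤ) → ℋ →L[ℂ] ℋ) : (Fin d → ℤ) → ℋ →L[ℂ] ℋ :=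
  fun x => ∑ v ∈ LamD d, Cop a tp K n v * ω (x - v) * Cop a tp K n v

/-- The sequence `ρ⁽⁰⁾ = ρ`, `ρ⁽ⁿ⁺¹⁾ = 𝔍_n ρ⁽ⁿ⁾` generated by `ρ` and `(𝔍_n)`. -/
def seqJ (a : ℕ → ℋ →L[ℂ] ℋ) (ρ : ℤ → ℋ →L[ℂ] ℋ) : ℕ → ℤ → ℋ →L[ℂ] ℋ
  | 0 => ρ
  | n + 1 => Jmap1 a n (seqJ a ρ n)

/-- Regularity of a 1-dimensional nucleus `ρ`:
`lim_n ∑_x e^{itx/√n} Tr[ρ⁽ⁿ⁾(x)] = e^{-t²/2}` for every real `t`. -/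
def Regular (a : ℕ → ℋ →L[ℂ] ℋ) (ρ : ℤ → ℋ →L[ℂ] ℋ) : Prop :=
  ∀ t : ℝ, Tendsto (fun n : ℕ => ∑' x : ℤ,
      Complex.exp (Complex.I * (t : ℂ) * (x : ℂ) / (Real.sqrt n : ℂ)) * (trH (seqJ a ρ n x) : ℂ))
    atTop (nhds (Complex.exp (-(t : ℂ) ^ 2 / 2)))

/-- The rank-one (Dirac) operator `|u⟩⟨v| : w ↦ ⟪v, w⟫ u`. -/
def dyad {E : Type} [NormedAddCommGroup E] [InnerProductSpace ℂ E] (u v : E) : E →L[ℂ] E :=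
  (toSpanSingleton ℂ u).comp (innerSL ℂ v)

/-- `ℓ²(ℤ^d)`. -/
abbrev l2Z (d : ℕ) : Type := lp (fun _ : Fin d → ℤ => ℂ) 2

/-- The canonical orthonormal basis `{δ_x : x ∈ ℤ^d}` of `ℓ²(ℤ^d)`. -/
def deltaV {d : ℕ} (x : Fin d → ℤ) : l2Z d := lp.single 2 x 1

/-- A characterization of the Hilbert-space tensor product `E = ℓ²(ℤ^d) ⊗ Hs`:
`tv` is the bilinear map `(f, u) ↦ f ⊗ u`, with `⟪f⊗u, g⊗v⟫ = ⟪f,g⟫⟪u,v⟫` and dense span,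
and `top2` sends a pair of bounded operators to their tensor product operator:
`(A ⊗ B)(f ⊗ u) = (A f) ⊗ (B u)`. -/
def IsTensor2 {d : ℕ} {Hs E : Type} [NormedAddCommGroup Hs] [InnerProductSpace ℂ Hs]
    [NormedAddCommGroup E] [InnerProductSpace ℂ E]
    (tv : l2Z d →ₗ[ℂ] Hs →ₗ[ℂ] E)
    (top2 : (l2Z d →L[ℂ] l2Z d) → (Hs →L[ℂ] Hs) → (E →L[ℂ] E)) : Prop :=
  (∀ (f g : l2Z d) (u v : Hs),
      (@inner ℂ _ _ (tv f u) (tv g v)) = (@inner ℂ _ _ f g) * (@inner ℂ _ _ u v)) ∧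
  ((Submodule.span ℂ {z : E | ∃ f u, z = tv f u}).topologicalClosure = ⊤) ∧
  (∀ (A : l2Z d →L[ℂ] l2Z d) (B : Hs →L[ℂ] Hs) (f : l2Z d) (u : Hs),
      top2 A B (tv f u) = tv (A f) (B u))

/-- The orthonormal basis `{δ_x ⊗ b_κ}` of the tensor product `ℓ²(ℤ^d) ⊗ Hs` induced by the
canonical basis of `ℓ²(ℤ^d)` and an orthonormal basis `b` of `Hs`. -/
def tbasis {d : ℕ} {Hs E : Type} [NormedAddCommGroup Hs] [InnerProductSpace ℂ Hs]
    [NormedAddCommGroup E] [InnerProductSpace ℂ E]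
    (tv : l2Z d →ₗ[ℂ] Hs →ₗ[ℂ] E) {κ : Type} (b : κ → Hs) : (Fin d → ℤ) × κ → E :=
  fun p => tv (deltaV p.1) (b p.2)

/-- The Kraus operators `M^{(n)}_{x,y} = |δ_x⟩⟨δ_y| ⊗ C_n^{(x-y)}` if `x - y ∈ Λ^d`, else `0`. -/
def Mop {d : ℕ} {Hd E : Type} [NormedAddCommGroup Hd] [InnerProductSpace ℂ Hd]
    [NormedAddCommGroup E] [InnerProductSpace ℂ E]
    (a : ℕ → ℋ →L[ℂ] ℋ) (tp : (Fin d → ℋ →L[ℂ] ℋ) → (Hd →L[ℂ] Hd)) (K : Hd ≃ₗᵢ[ℂ] ℋ)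
    (top2 : (l2Z d →L[ℂ] l2Z d) → (ℋ →L[ℂ] ℋ) → (E →L[ℂ] E))
    (n : ℕ) (x y : Fin d → ℤ) : E →L[ℂ] E :=
  if x - y ∈ LamD d then top2 (dyad (deltaV x) (deltaV y)) (Cop a tp K n (x - y)) else 0

/-- The 1-dimensional nucleus `ρ_σ` concentrated at `0` with value `|Z_σ⟩⟨Z_σ|`. -/
def rhoPoint (σ : Finset ℕ) : ℤ → ℋ →L[ℂ] ℋ := fun x => if x = 0 then dyad (Z σ) (Z σ) else 0

/-- `ℓ²(ℤ^d; ℋ)`, the space of square-summable `ℋ`-valued functions on `ℤ^d`. -/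
abbrev l2ZH (d : ℕ) : Type := lp (fun _ : Fin d → ℤ => ℋ) 2
/-! Writing `x = y + ε`, one has `M*_{y+ε,y} M_{y+ε,y} = |δ_y⟩⟨δ_y| ⊗ C_ε* C_ε`.
Since `(∂_n* + ∂_n)² = I`, the self-adjoint operators `L_n`, `R_n` satisfy `L_n² + R_n² = I`, and
expanding the tensor products gives `∑_{ε ∈ Λ^d} C_ε* C_ε = I`. The series thus reduces to the
resolution of the identity `∑_y |δ_y⟩⟨δ_y| ⊗ I = I`, which converges strongly: its partial sums are
projections, hence uniformly bounded, and they converge on elementary tensors, whose span is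
dense. -/

open scoped InnerProductSpace
open InnerProductSpace (rankOne rankOne_apply rankOne_comp_rankOne adjoint_rankOne)

section General

variable {𝕜 : Type} [NontriviallyNormedField 𝕜]

theorem tendsto_apply_of_norm_le_of_dense_span {ι F G : Type}
    [NormedAddCommGroup F] [NormedSpace 𝕜 F] [NormedAddCommGroup G] [NormedSpace 𝕜 G]
    {l : Filter ι} {T : ι → F →L[𝕜] G} {S : F →L[𝕜] G} {C : ℝ} (hT : ∀ i, ‖T i‖ ≤ C)
    {s : Set F} (hs : (Submodule.span 𝕜 s).topologicalClosure = ⊤)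
    (h : ∀ x ∈ s, Tendsto (fun i => T i x) l (nhds (S x))) (x : F) :
    Tendsto (fun i => T i x) l (nhds (S x)) := by
  let V : Submodule 𝕜 F :=
    { carrier := {x | Tendsto (fun i => T i x) l (nhds (S x))}
      add_mem' := fun hx hy => by simpa using hx.add hy
      zero_mem' := by simpa using tendsto_const_nhds
      smul_mem' := fun c _ hx => by simpa using hx.const_smul c }
  have hT' : Equicontinuous fun i => ⇑(T i) :=
    ((NormedSpace.equicontinuous_TFAE T).out 5 1).mp (⟨C, hT⟩ : ∃ C, ∀ i, ‖T i‖ ≤ C)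
  have hV : IsClosed (V : Set F) := hT'.isClosed_setOfPred_tendsto S.continuous
  have hsV : (Submodule.span 𝕜 s).topologicalClosure ≤ V :=
    Submodule.topologicalClosure_minimal _ (Submodule.span_le.mpr h) hV
  exact hsV (hs ▸ Submodule.mem_top)

theorem hasSum_prod_of_finite_snd_support {α β M : Type} [AddCommMonoid M] [TopologicalSpace M]
    [ContinuousAdd M] {f : α × β → M} (s : Finset β) (hf : ∀ x, ∀ b ∉ s, f (x, b) = 0)
    {g : β → M} (hg : ∀ b ∈ s, HasSum (fun x => f (x, b)) (g b)) :
    HasSum f (∑ b ∈ s, g b) := by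
  classical
  have hfiber : ∀ b ∈ s, HasSum (fun p : α × β => if p.2 = b then f p else 0) (g b) := by
    intro b hb
    refine (Function.Injective.hasSum_iff (g := fun x : α => (x, b))
      (fun x y hxy => congrArg Prod.fst hxy)
      fun p hp => if_neg fun hpb => hp ⟨p.1, by rw [← hpb]⟩).mp ?_
    simpa [Function.comp_def] using hg b hb
  convert hasSum_sum hfiber using 1
  ext ⟨x, b⟩
  simp only [Finset.sum_ite_eq]
  split_ifs with hb
  · rfl
  · exact hf x b hb

end General

section Hilbert

variable {F : Type} [NormedAddCommGroup F] [InnerProductSpace ℂ F]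

theorem ContinuousLinearMap.adjoint_eq_of_dense_span [CompleteSpace F] {s : Set F}
    (hs : (Submodule.span ℂ s).topologicalClosure = ⊤) {S T : F →L[ℂ] F}
    (h : ∀ x ∈ s, ∀ y ∈ s, ⟪S x, y⟫_ℂ = ⟪x, T y⟫_ℂ) : adjoint T = S := by
  have hs' := Submodule.dense_iff_topologicalClosure_eq_top.mpr hs
  refine ext_on hs' fun x hx => ?_
  have : innerSL ℂ (adjoint T x) = innerSL ℂ (S x) :=
    ext_on hs' fun y hy => by simp [adjoint_inner_left, h x hx y hy]
  exact ext_inner_right ℂ fun y => by simpa using congr($this y)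

theorem dyad_eq_rankOne (u v : F) : dyad u v = rankOne ℂ u v := rfl

theorem Orthonormal.isStarProjection_sum_rankOne [CompleteSpace F] {ι : Type} {b : ι → F}
    (hb : Orthonormal ℂ b) (s : Finset ι) : IsStarProjection (∑ i ∈ s, rankOne ℂ (b i) (b i)) := by
  classical
  refine ⟨?_, isSelfAdjoint_sum s fun i _ => ?_⟩
  · have hmul : ∀ i j, rankOne ℂ (b i) (b i) * rankOne ℂ (b j) (b j)
        = if i = j then rankOne ℂ (b i) (b i) else 0 := by
      intro i j
      rw [mul_def, rankOne_comp_rankOne, orthonormal_iff_ite.mp hb]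
      split_ifs with hij
      · rw [hij, one_smul]
      · rw [zero_smul]
    simp only [IsIdempotentElem, Finset.sum_mul_sum, hmul, Finset.sum_ite_eq]
    exact Finset.sum_congr rfl fun i hi => if_pos hi
  · rw [IsSelfAdjoint, star_eq_adjoint, adjoint_rankOne]

end Hilbert

section Bases

theorem HilbertBasis.default_lp_apply {ι : Type} [DecidableEq ι] (i : ι) :
    (default : HilbertBasis ι ℂ (lp (fun _ : ι => ℂ) 2)) i = lp.single 2 i 1 :=
  (HilbertBasis.repr_symm_single _ i).symm

theorem Z_eq_hilbertBasis : Z = ⇑(default : HilbertBasis (Finset ℕ) ℂ ℋ) :=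
  funext fun σ => (HilbertBasis.default_lp_apply σ).symm

theorem deltaV_eq_hilbertBasis {d : ℕ} :
    deltaV = ⇑(default : HilbertBasis (Fin d → ℤ) ℂ (l2Z d)) :=
  funext fun x => (HilbertBasis.default_lp_apply x).symm

theorem dense_span_Z : (Submodule.span ℂ (Set.range Z)).topologicalClosure = ⊤ := by
  rw [Z_eq_hilbertBasis]
  exact HilbertBasis.dense_span _

end Bases

section Annihilation

variable {a : ℕ → ℋ →L[ℂ] ℋ}

theorem QBN.adjoint_add_self_mul_self (ha : QBN a) (n : ℕ) :
    (adjoint (a n) + a n) * (adjoint (a n) + a n) = 1 := by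
  refine ext_on (Submodule.dense_iff_topologicalClosure_eq_top.mpr dense_span_Z) ?_
  rintro _ ⟨σ, rfl⟩
  by_cases hn : n ∈ σ
  · simp [ha.1, ha.2, hn, Finset.insert_erase hn]
  · simp [ha.1, ha.2, hn, Finset.erase_insert hn]

theorem isSelfAdjoint_Lop (n : ℕ) : IsSelfAdjoint (Lop a n) := by
  rw [IsSelfAdjoint, Lop, star_smul, star_sub, star_add, star_one, star_eq_adjoint (a n),
    ← star_eq_adjoint, star_star, add_comm (a n)]
  norm_num [Complex.star_def]

theorem isSelfAdjoint_Rop (n : ℕ) : IsSelfAdjoint (Rop a n) := by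
  rw [IsSelfAdjoint, Rop, star_smul, star_add, star_add, star_one, star_eq_adjoint (a n),
    ← star_eq_adjoint, star_star, add_comm (a n)]
  norm_num [Complex.star_def]

theorem QBN.sum_adjoint_Bop_mul_Bop (ha : QBN a) (n : ℕ) :
    ∑ e ∈ Lam, adjoint (Bop a n e) * Bop a n e = 1 := by
  rw [Lam, Finset.sum_pair (by norm_num), Bop, Bop, if_pos rfl, if_neg (by norm_num),
    ← star_eq_adjoint, ← star_eq_adjoint, (isSelfAdjoint_Lop n).star_eq,
    (isSelfAdjoint_Rop n).star_eq, Lop, Rop, smul_mul_smul_comm, smul_mul_smul_comm, ← smul_add]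
  set s := adjoint (a n) + a n
  rw [show (s - 1) * (s - 1) + (s + 1) * (s + 1) = s * s + s * s + 1 + 1 by noncomm_ring,
    ha.adjoint_add_self_mul_self, ← one_smul ℂ (1 : ℋ →L[ℂ] ℋ), ← add_smul, ← add_smul,
    ← add_smul, smul_smul]
  norm_num

end Annihilation

namespace IsTensorD

variable {Hs : Type} [NormedAddCommGroup Hs] [InnerProductSpace ℂ Hs]
  {d : ℕ} {Hd : Type} [NormedAddCommGroup Hd] [InnerProductSpace ℂ Hd]
  {tpv : MultilinearMap ℂ (fun _ : Fin d => Hs) Hd} {tp : (Fin d → Hs →L[ℂ] Hs) → (Hd →L[ℂ] Hd)}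

theorem ext (h : IsTensorD tpv tp) {S T : Hd →L[ℂ] Hd} (hST : ∀ u, S (tpv u) = T (tpv u)) :
    S = T :=
  ext_on (Submodule.dense_iff_topologicalClosure_eq_top.mpr h.2.1) <| by
    rintro _ ⟨u, rfl⟩
    exact hST u

theorem mul (h : IsTensorD tpv tp) (A B : Fin d → Hs →L[ℂ] Hs) :
    tp A * tp B = tp fun j => A j * B j :=
  h.ext fun u => by simp [h.2.2]

theorem adjoint_eq [CompleteSpace Hs] [CompleteSpace Hd] (h : IsTensorD tpv tp)
    (A : Fin d → Hs →L[ℂ] Hs) : adjoint (tp A) = tp fun j => adjoint (A j) := by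
  refine adjoint_eq_of_dense_span h.2.1 ?_
  rintro _ ⟨u, rfl⟩ _ ⟨v, rfl⟩
  simp only [h.2.2, h.1, adjoint_inner_left]

theorem sum_piFinset_eq_one (h : IsTensorD tpv tp) {s : Finset ℤ} {D : ℤ → Hs →L[ℂ] Hs}
    (hD : ∑ e ∈ s, D e = 1) :
    ∑ v ∈ Fintype.piFinset (fun _ : Fin d => s), tp (fun j => D (v j)) = 1 :=
  h.ext fun u => by
    classical
    simp only [sum_apply, h.2.2]
    rw [← MultilinearMap.map_sum_finset tpv (fun j e => D e (u j)) fun _ => s]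
    simp only [← sum_apply, hD, one_apply_eq_self]

end IsTensorD

theorem conjK_eq_conjStarAlgEquiv {Hs Hd : Type} [NormedAddCommGroup Hs]
    [InnerProductSpace ℂ Hs] [CompleteSpace Hs] [NormedAddCommGroup Hd] [InnerProductSpace ℂ Hd]
    [CompleteSpace Hd] (K : Hd ≃ₗᵢ[ℂ] Hs) (T : Hd →L[ℂ] Hd) :
    conjK K T = K.conjStarAlgEquiv T :=
  rfl

theorem QBN.sum_adjoint_Cop_mul_Cop {a : ℕ → ℋ →L[ℂ] ℋ} (ha : QBN a) {d : ℕ} {Hd : Type}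
    [NormedAddCommGroup Hd] [InnerProductSpace ℂ Hd] [CompleteSpace Hd]
    {tpv : MultilinearMap ℂ (fun _ : Fin d => ℋ) Hd} {tp : (Fin d → ℋ →L[ℂ] ℋ) → (Hd →L[ℂ] Hd)}
    (htp : IsTensorD tpv tp) (K : Hd ≃ₗᵢ[ℂ] ℋ) (n : ℕ) :
    ∑ v ∈ LamD d, adjoint (Cop a tp K n v) * Cop a tp K n v = 1 := by
  simp only [Cop, conjK_eq_conjStarAlgEquiv, ← star_eq_adjoint, ← map_star, ← map_mul,
    ← map_sum]
  simp only [star_eq_adjoint, htp.adjoint_eq, htp.mul]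
  rw [LamD, htp.sum_piFinset_eq_one (ha.sum_adjoint_Bop_mul_Bop n), map_one]

namespace IsTensor2

variable {d : ℕ} {Hs E : Type} [NormedAddCommGroup Hs] [InnerProductSpace ℂ Hs]
  [NormedAddCommGroup E] [InnerProductSpace ℂ E] {tv : l2Z d →ₗ[ℂ] Hs →ₗ[ℂ] E}
  {top2 : (l2Z d →L[ℂ] l2Z d) → (Hs →L[ℂ] Hs) → (E →L[ℂ] E)}

theorem ext (h : IsTensor2 tv top2) {S T : E →L[ℂ] E} (hST : ∀ f u, S (tv f u) = T (tv f u)) :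
    S = T :=
  ext_on (Submodule.dense_iff_topologicalClosure_eq_top.mpr h.2.1) <| by
    rintro _ ⟨f, u, rfl⟩
    exact hST f u

theorem mul (h : IsTensor2 tv top2) (A A' : l2Z d →L[ℂ] l2Z d) (B B' : Hs →L[ℂ] Hs) :
    top2 A B * top2 A' B' = top2 (A * A') (B * B') :=
  h.ext fun f u => by simp [h.2.2]

theorem one_one (h : IsTensor2 tv top2) : top2 1 1 = 1 :=
  h.ext fun f u => by simp [h.2.2]

theorem sum_left (h : IsTensor2 tv top2) {ι : Type} (s : Finset ι) (A : ι → l2Z d →L[ℂ] l2Z d)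
    (B : Hs →L[ℂ] Hs) : top2 (∑ i ∈ s, A i) B = ∑ i ∈ s, top2 (A i) B :=
  h.ext fun f u => by simp [h.2.2]

theorem sum_right (h : IsTensor2 tv top2) {ι : Type} (s : Finset ι) (A : l2Z d →L[ℂ] l2Z d)
    (B : ι → Hs →L[ℂ] Hs) : top2 A (∑ i ∈ s, B i) = ∑ i ∈ s, top2 A (B i) :=
  h.ext fun f u => by simp [h.2.2]

theorem adjoint_eq [CompleteSpace Hs] [CompleteSpace E] (h : IsTensor2 tv top2)
    (A : l2Z d →L[ℂ] l2Z d) (B : Hs →L[ℂ] Hs) :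
    adjoint (top2 A B) = top2 (adjoint A) (adjoint B) := by
  refine adjoint_eq_of_dense_span h.2.1 ?_
  rintro _ ⟨f, u, rfl⟩ _ ⟨g, v, rfl⟩
  simp only [h.2.2, h.1, adjoint_inner_left]

theorem isStarProjection [CompleteSpace Hs] [CompleteSpace E] (h : IsTensor2 tv top2)
    {A : l2Z d →L[ℂ] l2Z d} {B : Hs →L[ℂ] Hs} (hA : IsStarProjection A)
    (hB : IsStarProjection B) : IsStarProjection (top2 A B) where
  isIdempotentElem := by rw [IsIdempotentElem, h.mul, hA.isIdempotentElem, hB.isIdempotentElem]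
  isSelfAdjoint := by
    rw [IsSelfAdjoint, star_eq_adjoint, h.adjoint_eq, ← star_eq_adjoint, ← star_eq_adjoint,
      hA.isSelfAdjoint, hB.isSelfAdjoint]

theorem norm_tv (h : IsTensor2 tv top2) (f : l2Z d) (u : Hs) : ‖tv f u‖ = ‖f‖ * ‖u‖ := by
  have hsq : ‖tv f u‖ ^ 2 = (‖f‖ * ‖u‖) ^ 2 := by
    have := h.1 f f u u
    simp only [inner_self_eq_norm_sq_to_K] at this
    rw [mul_pow]
    exact_mod_cast this
  exact (sq_eq_sq₀ (norm_nonneg _) (by positivity)).mp hsq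

theorem continuous_tv_left (h : IsTensor2 tv top2) (u : Hs) : Continuous fun f => tv f u :=
  AddMonoidHomClass.continuous_of_bound (tv.flip u) ‖u‖ fun f => by
    rw [LinearMap.flip_apply, h.norm_tv, mul_comm]

theorem hasSum_rankOne [CompleteSpace Hs] [CompleteSpace E] (h : IsTensor2 tv top2) {κ : Type}
    (b : HilbertBasis κ ℂ (l2Z d)) (B : Hs →L[ℂ] Hs) (ξ : E) :
    HasSum (fun i => top2 (rankOne ℂ (b i) (b i)) B ξ) (top2 1 B ξ) := by
  let P (F : Finset κ) : l2Z d →L[ℂ] l2Z d := ∑ i ∈ F, rankOne ℂ (b i) (b i)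
  have hP : ∀ F, ‖top2 (P F) 1‖ ≤ 1 := fun F =>
    (h.isStarProjection (b.orthonormal.isStarProjection_sum_rankOne F) (.one _)).norm_le
  have hconv : ∀ z ∈ {z | ∃ f u, z = tv f u},
      Tendsto (fun F => top2 (P F) 1 z) atTop (nhds ((1 : E →L[ℂ] E) z)) := by
    rintro _ ⟨f, u, rfl⟩
    have hf : Tendsto (fun F => P F f) atTop (nhds f) := by
      have := b.hasSum_repr f
      simp only [b.repr_apply_apply] at this
      simp only [P, sum_apply, rankOne_apply]
      exact this
    simpa [h.2.2, Function.comp_def] using ((h.continuous_tv_left u).tendsto f).comp hf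
  have hPB : ∀ A, top2 A 1 (top2 1 B ξ) = top2 A B ξ := fun A => by
    rw [← mul_apply_eq_comp, h.mul, mul_one, one_mul]
  show Tendsto _ atTop _
  simpa [P, h.sum_left, sum_apply, hPB] using
    tendsto_apply_of_norm_le_of_dense_span hP h.2.1 hconv (top2 1 B ξ)

end IsTensor2

theorem adjoint_Mop_mul_Mop {a : ℕ → ℋ →L[ℂ] ℋ} {d : ℕ} {Hd E : Type}
    [NormedAddCommGroup Hd] [InnerProductSpace ℂ Hd] [NormedAddCommGroup E]
    [InnerProductSpace ℂ E] [CompleteSpace E] {tv : l2Z d →ₗ[ℂ] ℋ →ₗ[ℂ] E}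
    {tp : (Fin d → ℋ →L[ℂ] ℋ) → (Hd →L[ℂ] Hd)} (K : Hd ≃ₗᵢ[ℂ] ℋ)
    {top2 : (l2Z d →L[ℂ] l2Z d) → (ℋ →L[ℂ] ℋ) → (E →L[ℂ] E)} (htp2 : IsTensor2 tv top2)
    (n : ℕ) (x y : Fin d → ℤ) :
    adjoint (Mop a tp K top2 n x y) * Mop a tp K top2 n x y =
      if x - y ∈ LamD d then
        top2 (rankOne ℂ (deltaV y) (deltaV y))
          (adjoint (Cop a tp K n (x - y)) * Cop a tp K n (x - y))
      else 0 := by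
  unfold Mop
  split_ifs
  · rw [htp2.adjoint_eq, htp2.mul, dyad_eq_rankOne, adjoint_rankOne, mul_def,
      rankOne_comp_rankOne, deltaV_eq_hilbertBasis,
      orthonormal_iff_ite.mp (HilbertBasis.orthonormal _), if_pos rfl, one_smul]
  · simp

theorem stmt8_general (a : ℕ → ℋ →L[ℂ] ℋ) (ha : QBN a)
    (d : ℕ)
    (Hd : Type) [NormedAddCommGroup Hd] [InnerProductSpace ℂ Hd] [CompleteSpace Hd]
    (tpv : MultilinearMap ℂ (fun _ : Fin d => ℋ) Hd)
    (tp : (Fin d → ℋ →L[ℂ] ℋ) → (Hd →L[ℂ] Hd))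
    (htp : IsTensorD tpv tp)
    (K : Hd ≃ₗᵢ[ℂ] ℋ)
    (E : Type) [NormedAddCommGroup E] [InnerProductSpace ℂ E] [CompleteSpace E]
    (tv : l2Z d →ₗ[ℂ] ℋ →ₗ[ℂ] E)
    (top2 : (l2Z d →L[ℂ] l2Z d) → (ℋ →L[ℂ] ℋ) → (E →L[ℂ] E))
    (htp2 : IsTensor2 tv top2) (n : ℕ) :
    ∀ ξ : E, HasSum (fun p : (Fin d → ℤ) × (Fin d → ℤ) =>
      (ContinuousLinearMap.adjoint (Mop a tp K top2 n p.1 p.2) * Mop a tp K top2 n p.1 p.2) ξ)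
      ξ := by
  intro ξ
  have hsum : ∑ ε ∈ LamD d, top2 1 (adjoint (Cop a tp K n ε) * Cop a tp K n ε) ξ = ξ := by
    rw [← sum_apply, ← htp2.sum_right, ha.sum_adjoint_Cop_mul_Cop htp K n, htp2.one_one,
      one_apply_eq_self]
  -- index the pairs `(x, y)` as `(y + ε, y)`
  rw [← ((Equiv.prodShear (.refl _) Equiv.addLeft).trans (.prodComm _ _)).hasSum_iff]
  convert hasSum_prod_of_finite_snd_support (LamD d)
    (g := fun ε => top2 1 (adjoint (Cop a tp K n ε) * Cop a tp K n ε) ξ) ?_ ?_ using 1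
  · exact hsum.symm
  · intro y ε hε
    show (adjoint (Mop a tp K top2 n (y + ε) y) * Mop a tp K top2 n (y + ε) y) ξ = 0
    rw [adjoint_Mop_mul_Mop K htp2, add_sub_cancel_left, if_neg hε, zero_apply]
  · intro ε hε
    show HasSum (fun y =>
      (adjoint (Mop a tp K top2 n (y + ε) y) * Mop a tp K top2 n (y + ε) y) ξ) _
    simp only [adjoint_Mop_mul_Mop K htp2, add_sub_cancel_left, if_pos hε, deltaV_eq_hilbertBasis]
    exact htp2.hasSum_rankOne default _ ξ

/-- For every `n`, the Kraus family `{M^{(n)}_{x,y}}` satisfies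
`∑_{x,y} (M^{(n)}_{x,y})* M^{(n)}_{x,y} = I`, the series converging strongly. -/
theorem stmt8 (a : ℕ → ℋ →L[ℂ] ℋ) (ha : QBN a)
    (d : ℕ) (hd : 2 ≤ d)
    (Hd : Type) [NormedAddCommGroup Hd] [InnerProductSpace ℂ Hd] [CompleteSpace Hd]
    (tpv : MultilinearMap ℂ (fun _ : Fin d => ℋ) Hd)
    (tp : (Fin d → ℋ →L[ℂ] ℋ) → (Hd →L[ℂ] Hd))
    (htp : IsTensorD tpv tp)
    (K : Hd ≃ₗᵢ[ℂ] ℋ)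
    (E : Type) [NormedAddCommGroup E] [InnerProductSpace ℂ E] [CompleteSpace E]
    (tv : l2Z d →ₗ[ℂ] ℋ →ₗ[ℂ] E)
    (top2 : (l2Z d →L[ℂ] l2Z d) → (ℋ →L[ℂ] ℋ) → (E →L[ℂ] E))
    (htp2 : IsTensor2 tv top2) (n : ℕ) :
    ∀ ξ : E, HasSum (fun p : (Fin d → ℤ) × (Fin d → ℤ) =>
      (ContinuousLinearMap.adjoint (Mop a tp K top2 n p.1 p.2) * Mop a tp K top2 n p.1 p.2) ξ)
      ξ :=
  stmt8_general a ha d Hd tpv tp htp K E tv top2 htp2 n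
end
end

section
/- Let (ω^{(n)})_{n≥0} satisfy ω^{(n+1)} = 𝔍_n^{(d)} ω^{(n)} for all n ≥ 0, and suppose ω^{(0)}(x) = K (ρ_1^{(0)}(x_1) ⊗ ⋯ ⊗ ρ_d^{(0)}(x_d)) K⁻¹ for all x = (x_1, …, x_d) ∈ ℤ^d, where ρ_1^{(0)}, …, ρ_d^{(0)} are 1-dimensional nucleuses on H. Then for every n ≥ 1 and every x = (x_1, …, x_d) ∈ ℤ^d, the probability distribution of the walk factorizes: Tr[ω^{(n)}(x)] = ∏_{j=1}^d Tr[ρ_j^{(n)}(x_j)], where ρ_j^{(n)} = (𝔍_{n−1} ∘ ⋯ ∘ 𝔍_0) ρ_j^{(0)}. -/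
/- Common setup: quantum Bernoulli noises on `ℋ = ℓ²(Γ)`, `Γ` = finite subsets of `ℕ`. -/

noncomputable section

open ContinuousLinearMap Filter

/-!
Both walks expand over lattice paths. After `n` steps, `ω⁽ⁿ⁾(x)` is the sum over paths
`(ε⁽⁰⁾, …, ε⁽ⁿ⁻¹⁾) ∈ (Λ^d)ⁿ` of `K (⊗ⱼ Dⱼ ρⱼ(xⱼ - ∑ₖ εⱼ⁽ᵏ⁾) Dⱼ*) K⁻¹`, where `Dⱼ` is the product
of the `B_k^{(εⱼ⁽ᵏ⁾)}` along the `j`-th coordinate of the path, and `ρⱼ⁽ⁿ⁾(xⱼ)` is the same sum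
over the coordinate paths in `Λⁿ`. All summands are positive, so traces may be computed in
`[0, ∞]`, where they are additive and independent of the orthonormal basis. In the product basis
`{⊗ⱼ Z_{τⱼ}}` the trace of a tensor product of positive operators is the product of the traces,
and since a path in `(Λ^d)ⁿ` is a `d`-tuple of paths in `Λⁿ`, the sum of products over paths is
the product of the sums.
-/

open scoped InnerProductSpace ENNReal ComplexOrder

section Finset

variable {α : Type*} {M : Type*} [AddCommMonoid M]

theorem Finset.sum_piFinset_succ_snoc (s : Finset α) (n : ℕ) (f : (Fin (n + 1) → α) → M) :
    ∑ q ∈ Fintype.piFinset (fun _ : Fin (n + 1) => s), f q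
      = ∑ e ∈ s, ∑ q ∈ Fintype.piFinset (fun _ : Fin n => s), f (Fin.snoc q e) := by
  have h := Finset.filter_piFinset_eq_map_snocEquiv (fun _ : Fin (n + 1) => s) fun _ => True
  simp only [Finset.filter_true] at h
  rw [h, Finset.sum_map, Finset.sum_product]
  rfl

theorem Finset.sum_piFinset_prod_transpose {R : Type*} [CommSemiring R] {ι κ : Type*}
    [Fintype ι] [DecidableEq ι] [Fintype κ] [DecidableEq κ] (s : Finset α)
    (f : κ → (ι → α) → R) :
    ∑ P ∈ Fintype.piFinset (fun _ : ι => Fintype.piFinset fun _ : κ => s),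
        ∏ k, f k (fun i => P i k)
      = ∏ k, ∑ q ∈ Fintype.piFinset (fun _ : ι => s), f k q := by
  rw [Finset.prod_univ_sum]
  refine Finset.sum_nbij' (fun P k i => P i k) (fun Q i k => Q k i) ?_ ?_ (fun _ _ => rfl)
    (fun _ _ => rfl) (fun _ _ => rfl) <;>
  · intro P hP
    simp only [Fintype.mem_piFinset] at hP ⊢
    exact fun _ _ => hP _ _

theorem ENNReal.tsum_pi_prod {X : Type*} {m : ℕ} (g : Fin m → X → ℝ≥0∞) :
    ∑' f : Fin m → X, ∏ j, g j (f j) = ∏ j, ∑' x, g j x := by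
  induction m with
  | zero => simp
  | succ m ih =>
    rw [← (Fin.consEquiv fun _ => X).tsum_eq, ENNReal.tsum_prod', Fin.prod_univ_succ,
      ← ih, ← ENNReal.tsum_mul_right]
    refine tsum_congr fun x => ?_
    rw [← ENNReal.tsum_mul_left]
    refine tsum_congr fun f => ?_
    simp [Fin.consEquiv, Fin.prod_univ_succ]

end Finset

theorem Complex.re_prod_of_nonneg {ι : Type*} (s : Finset ι) {z : ι → ℂ}
    (hz : ∀ i ∈ s, 0 ≤ z i) : (∏ i ∈ s, z i).re = ∏ i ∈ s, (z i).re := by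
  rw [Finset.prod_congr rfl fun i hi => Complex.eq_re_of_ofReal_le (r := 0) (by
    exact_mod_cast hz i hi), ← Complex.ofReal_prod, Complex.ofReal_re]

theorem MultilinearMap.map_mem_span_of_forall_mem_span {R M N ι κ : Type*} [CommSemiring R]
    [AddCommMonoid M] [Module R M] [AddCommMonoid N] [Module R N] [Fintype κ] [DecidableEq κ]
    (f : MultilinearMap R (fun _ : κ => M) N) (b : ι → M) {u : κ → M}
    (hu : ∀ j, u j ∈ Submodule.span R (Set.range b)) :
    f u ∈ Submodule.span R (Set.range fun τ : κ → ι => f fun j => b (τ j)) := by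
  choose c hc using fun j => Finsupp.mem_span_range_iff_exists_finsupp.mp (hu j)
  have hu' : u = fun j => ∑ σ ∈ (c j).support, c j σ • b σ := funext fun j => (hc j).symm
  rw [hu', f.map_sum_finset]
  refine Submodule.sum_mem _ fun τ _ => ?_
  rw [f.map_smul_univ]
  exact Submodule.smul_mem _ _ (Submodule.subset_span ⟨τ, rfl⟩)

section PathExpansion

variable {R G : Type*}

def pathProd [Monoid R] (B : ℕ → G → R) : (n : ℕ) → (Fin n → G) → R
  | 0, _ => 1
  | n + 1, q => B n (q (Fin.last n)) * pathProd B n (Fin.init q)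

theorem pathProd_snoc [Monoid R] (B : ℕ → G → R) (n : ℕ) (q : Fin n → G) (e : G) :
    pathProd B (n + 1) (Fin.snoc q e) = B n e * pathProd B n q := by
  simp [pathProd, Fin.init_snoc]

theorem eq_sum_pathProd [Semiring R] [StarRing R] [AddCommGroup G] (S : Finset G)
    (B : ℕ → G → R) (ω : ℕ → G → R)
    (hω : ∀ n x, ω (n + 1) x = ∑ e ∈ S, B n e * ω n (x - e) * star (B n e)) (n : ℕ) (x : G) :
    ω n x = ∑ q ∈ Fintype.piFinset (fun _ : Fin n => S),
      pathProd B n q * ω 0 (x - ∑ i, q i) * star (pathProd B n q) := by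
  induction n generalizing x with
  | zero => simp [pathProd]
  | succ n ih =>
    rw [hω, Finset.sum_piFinset_succ_snoc]
    refine Finset.sum_congr rfl fun e _ => ?_
    rw [ih, Finset.mul_sum, Finset.sum_mul]
    refine Finset.sum_congr rfl fun q _ => ?_
    rw [pathProd_snoc, Fin.sum_univ_castSucc, Fin.snoc_last, star_mul]
    simp only [Fin.snoc_castSucc, sub_sub, add_comm e, mul_assoc]

end PathExpansion

section Trace

open ContinuousLinearMap

variable {E : Type} [NormedAddCommGroup E] [InnerProductSpace ℂ E] {ι κ : Type}

-- Unlike `trB`, whose `tsum` is junk `0` off summability, this is additive on positive operators.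
def ennTrace (b : ι → E) (T : E →L[ℂ] E) : ℝ≥0∞ :=
  ∑' i, ENNReal.ofReal (⟪b i, T (b i)⟫_ℂ).re

theorem trB_eq_toReal_ennTrace (b : ι → E) {T : E →L[ℂ] E} (hT : T.IsPositive) :
    trB b T = (ennTrace b T).toReal := by
  rw [trB, ennTrace, ENNReal.tsum_toReal_eq fun _ => ENNReal.ofReal_ne_top]
  exact tsum_congr fun i => (ENNReal.toReal_ofReal (hT.re_inner_nonneg_right _)).symm

theorem ennTrace_sum (b : ι → E) {P : Type*} (s : Finset P) {T : P → E →L[ℂ] E}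
    (hT : ∀ p ∈ s, (T p).IsPositive) :
    ennTrace b (∑ p ∈ s, T p) = ∑ p ∈ s, ennTrace b (T p) := by
  unfold ennTrace
  rw [← Summable.tsum_finsetSum fun _ _ => ENNReal.summable]
  refine tsum_congr fun i => ?_
  rw [sum_apply, inner_sum, Complex.re_sum]
  exact ENNReal.ofReal_sum_of_nonneg fun p hp => (hT p hp).re_inner_nonneg_right _

theorem HilbertBasis.tsum_ofReal_norm_inner_sq (b : HilbertBasis ι ℂ E) (v : E) :
    ∑' i, ENNReal.ofReal (‖⟪b i, v⟫_ℂ‖ ^ 2) = ENNReal.ofReal (‖v‖ ^ 2) := by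
  have h := lp.hasSum_norm (p := 2) (by norm_num) (b.repr v)
  simp only [b.repr_apply_apply, LinearIsometryEquiv.norm_map, ENNReal.toReal_ofNat,
    Real.rpow_two] at h
  rw [← ENNReal.ofReal_tsum_of_nonneg (fun _ => sq_nonneg _) h.summable, h.tsum_eq]

variable [CompleteSpace E]

theorem ennTrace_mul_self (b : ι → E) {S : E →L[ℂ] E} (hS : IsSelfAdjoint S) :
    ennTrace b (S * S) = ∑' i, ENNReal.ofReal (‖S (b i)‖ ^ 2) := by
  refine tsum_congr fun i => ?_
  change ENNReal.ofReal (⟪b i, S (S (b i))⟫_ℂ).re = _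
  rw [← adjoint_inner_left, hS.adjoint_eq, ← RCLike.re_to_complex,
    inner_self_eq_norm_sq]

theorem HilbertBasis.tsum_ofReal_norm_adjoint_apply_sq (b : HilbertBasis ι ℂ E)
    (c : HilbertBasis κ ℂ E) (W : E →L[ℂ] E) :
    ∑' i, ENNReal.ofReal (‖adjoint W (b i)‖ ^ 2) = ∑' j, ENNReal.ofReal (‖W (c j)‖ ^ 2) := by
  calc ∑' i, ENNReal.ofReal (‖adjoint W (b i)‖ ^ 2)
      = ∑' i, ∑' j, ENNReal.ofReal (‖⟪b i, W (c j)⟫_ℂ‖ ^ 2) := by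
        refine tsum_congr fun i => ?_
        rw [← c.tsum_ofReal_norm_inner_sq]
        exact tsum_congr fun j => by rw [adjoint_inner_right, norm_inner_symm]
    _ = ∑' j, ∑' i, ENNReal.ofReal (‖⟪b i, W (c j)⟫_ℂ‖ ^ 2) := ENNReal.tsum_comm
    _ = ∑' j, ENNReal.ofReal (‖W (c j)‖ ^ 2) :=
        tsum_congr fun j => b.tsum_ofReal_norm_inner_sq _

-- Writing `T = S * S` with `S = √T`, both traces equal the Hilbert–Schmidt norm of `S`.
theorem ennTrace_eq_of_isPositive (b : HilbertBasis ι ℂ E) (c : HilbertBasis κ ℂ E)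
    {T : E →L[ℂ] E} (hT : T.IsPositive) : ennTrace b T = ennTrace c T := by
  have hS : IsSelfAdjoint (CFC.sqrt T) := (CFC.sqrt_nonneg T).isSelfAdjoint
  rw [← CFC.sqrt_mul_sqrt_self T ((nonneg_iff_isPositive T).mpr hT), ennTrace_mul_self _ hS,
    ennTrace_mul_self _ hS, ← b.tsum_ofReal_norm_adjoint_apply_sq c, hS.adjoint_eq]

end Trace

protected def HilbertBasis.map {𝕜 ι E F : Type*} [RCLike 𝕜] [NormedAddCommGroup E]
    [InnerProductSpace 𝕜 E] [NormedAddCommGroup F] [InnerProductSpace 𝕜 F]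
    (b : HilbertBasis ι 𝕜 E) (L : E ≃ₗᵢ[𝕜] F) : HilbertBasis ι 𝕜 F :=
  HilbertBasis.ofRepr (L.symm.trans b.repr)

theorem HilbertBasis.coe_map {𝕜 ι E F : Type*} [RCLike 𝕜] [NormedAddCommGroup E]
    [InnerProductSpace 𝕜 E] [NormedAddCommGroup F] [InnerProductSpace 𝕜 F]
    (b : HilbertBasis ι 𝕜 E) (L : E ≃ₗᵢ[𝕜] F) : ⇑(b.map L) = L ∘ b := by
  classical
  funext i
  rw [← (b.map L).repr_symm_single, Function.comp_apply, ← b.repr_symm_single]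
  rfl

namespace IsTensorD

open ContinuousLinearMap Submodule

variable {Hs Hd : Type} [NormedAddCommGroup Hs] [InnerProductSpace ℂ Hs]
  [NormedAddCommGroup Hd] [InnerProductSpace ℂ Hd] {d : ℕ}
  {tpv : MultilinearMap ℂ (fun _ : Fin d => Hs) Hd} {tp : (Fin d → Hs →L[ℂ] Hs) → (Hd →L[ℂ] Hd)}
  {ι : Type}

theorem dense_span_range_tpv (htp : IsTensorD tpv tp) :
    Dense (span ℂ (Set.range fun u => tpv u) : Set Hd) :=
  dense_iff_topologicalClosure_eq_top.mpr htp.2.1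

theorem ext_tpv (htp : IsTensorD tpv tp) {f g : Hd →L[ℂ] Hd} (h : ∀ u, f (tpv u) = g (tpv u)) :
    f = g :=
  ext_on htp.dense_span_range_tpv (by rintro _ ⟨u, rfl⟩; exact h u)

theorem tp_mul (htp : IsTensorD tpv tp) (A B : Fin d → Hs →L[ℂ] Hs) :
    tp A * tp B = tp fun j => A j * B j :=
  htp.ext_tpv fun u => by
    change tp A (tp B (tpv u)) = _
    simp only [htp.2.2]
    rfl

theorem tp_one (htp : IsTensorD tpv tp) : tp (fun _ => 1) = 1 :=
  htp.ext_tpv fun u => by simp [htp.2.2]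

theorem eq_of_inner_tpv (htp : IsTensorD tpv tp) {v w : Hd}
    (h : ∀ u, ⟪tpv u, v⟫_ℂ = ⟪tpv u, w⟫_ℂ) : v = w := by
  have hvw : innerSLFlip ℂ v = innerSLFlip ℂ w :=
    ext_on htp.dense_span_range_tpv (by rintro _ ⟨u, rfl⟩; exact h u)
  exact ext_inner_left ℂ fun y => congr($hvw y)

theorem norm_tpv (htp : IsTensorD tpv tp) (u : Fin d → Hs) : ‖tpv u‖ = ∏ j, ‖u j‖ := by
  have h := htp.1 u u
  simp only [inner_self_eq_norm_sq_to_K] at h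
  exact (pow_left_inj₀ (norm_nonneg _) (Finset.prod_nonneg fun _ _ => norm_nonneg _)
    two_ne_zero).mp (by rw [← Finset.prod_pow]; exact_mod_cast h)

theorem orthonormal_tpv (htp : IsTensorD tpv tp) {b : ι → Hs} (hb : Orthonormal ℂ b) :
    Orthonormal ℂ fun τ : Fin d → ι => tpv fun j => b (τ j) := by
  classical
  rw [orthonormal_iff_ite] at hb ⊢
  intro τ τ'
  simp [htp.1, hb, Finset.prod_boole, funext_iff]

theorem dense_span_tpv (htp : IsTensorD tpv tp) (b : HilbertBasis ι ℂ Hs) :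
    ⊤ ≤ (span ℂ (Set.range fun τ : Fin d → ι => tpv fun j => b (τ j))).topologicalClosure := by
  set V := span ℂ (Set.range fun τ : Fin d → ι => tpv fun j => b (τ j))
  have hcont : Continuous tpv := tpv.continuous_of_bound 1 fun u => by rw [one_mul, htp.norm_tpv]
  have hD : Dense (Set.univ.pi fun _ : Fin d => (span ℂ (Set.range b) : Set Hs)) :=
    dense_pi _ fun _ _ => dense_iff_topologicalClosure_eq_top.mpr b.dense_span
  have hclosed : IsClosed (tpv ⁻¹' V.topologicalClosure) :=
    V.isClosed_topologicalClosure.preimage hcont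
  have hV : ∀ u, tpv u ∈ V.topologicalClosure := fun u =>
    hclosed.closure_subset_iff.mpr (fun u hu => V.le_topologicalClosure
      (tpv.map_mem_span_of_forall_mem_span b (Set.mem_univ_pi.mp hu)))
      (hD.closure_eq ▸ Set.mem_univ u)
  rw [← htp.2.1]
  exact topologicalClosure_minimal _ (span_le.mpr (by rintro _ ⟨u, rfl⟩; exact hV u))
    V.isClosed_topologicalClosure

theorem ennTrace_tp (htp : IsTensorD tpv tp) (b : ι → Hs) {T : Fin d → Hs →L[ℂ] Hs}
    (hT : ∀ j, (T j).IsPositive) :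
    ennTrace (fun τ : Fin d → ι => tpv fun j => b (τ j)) (tp T) = ∏ j, ennTrace b (T j) := by
  simp only [ennTrace, htp.2.2, htp.1]
  rw [← ENNReal.tsum_pi_prod]
  refine tsum_congr fun τ => ?_
  rw [Complex.re_prod_of_nonneg _ fun j _ => (hT j).inner_nonneg_right _]
  exact ENNReal.ofReal_prod_of_nonneg fun j _ => (hT j).re_inner_nonneg_right _

def tensorBasis [CompleteSpace Hd] (htp : IsTensorD tpv tp) (b : HilbertBasis ι ℂ Hs) :
    HilbertBasis (Fin d → ι) ℂ Hd :=
  HilbertBasis.mk (htp.orthonormal_tpv b.orthonormal) (htp.dense_span_tpv b)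

theorem coe_tensorBasis [CompleteSpace Hd] (htp : IsTensorD tpv tp) (b : HilbertBasis ι ℂ Hs) :
    ⇑(htp.tensorBasis b) = fun τ => tpv fun j => b (τ j) :=
  HilbertBasis.coe_mk _ _

variable [CompleteSpace Hs] [CompleteSpace Hd]

theorem star_tp (htp : IsTensorD tpv tp) (A : Fin d → Hs →L[ℂ] Hs) :
    star (tp A) = tp fun j => star (A j) := by
  refine (htp.ext_tpv fun u => htp.eq_of_inner_tpv fun w => ?_).symm
  rw [htp.2.2, star_eq_adjoint, adjoint_inner_right, htp.2.2, htp.1, htp.1]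
  exact Finset.prod_congr rfl fun j _ => by rw [star_eq_adjoint, adjoint_inner_right]

theorem isPositive_tp (htp : IsTensorD tpv tp) {T : Fin d → Hs →L[ℂ] Hs}
    (hT : ∀ j, (T j).IsPositive) : (tp T).IsPositive := by
  have hsqrt : T = fun j => star (CFC.sqrt (T j)) * CFC.sqrt (T j) := funext fun j => by
    rw [(CFC.sqrt_nonneg (T j)).isSelfAdjoint.star_eq,
      CFC.sqrt_mul_sqrt_self _ ((nonneg_iff_isPositive _).mpr (hT j))]
  rw [hsqrt, ← htp.tp_mul, ← htp.star_tp, star_eq_adjoint]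
  exact isPositive_adjoint_comp_self _

end IsTensorD

section Conjugation

open ContinuousLinearMap

variable {Hs Hd : Type} [NormedAddCommGroup Hs] [InnerProductSpace ℂ Hs]
  [NormedAddCommGroup Hd] [InnerProductSpace ℂ Hd] (K : Hd ≃ₗᵢ[ℂ] Hs)

theorem isPositive_conjK {T : Hd →L[ℂ] Hd} (hT : T.IsPositive) : (conjK K T).IsPositive :=
  (LinearMap.isPositive_linearIsometryEquiv_conj_iff K).mpr hT.toLinearMap

theorem ennTrace_conjK {ι : Type} (b : ι → Hs) (T : Hd →L[ℂ] Hd) :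
    ennTrace b (conjK K T) = ennTrace (K.symm ∘ b) T := by
  refine tsum_congr fun i => ?_
  simp [conjK, ← K.inner_map_map (K.symm (b i))]

variable [CompleteSpace Hs] [CompleteSpace Hd]

theorem conjK_eq_conjStarAlgEquiv_s13 : conjK K = K.conjStarAlgEquiv :=
  funext fun _ => rfl

end Conjugation

theorem IsTensorD.ennTrace_conjK_tp {Hs Hd Ht : Type} [NormedAddCommGroup Hs]
    [InnerProductSpace ℂ Hs] [CompleteSpace Hs] [NormedAddCommGroup Hd] [InnerProductSpace ℂ Hd]
    [CompleteSpace Hd] [NormedAddCommGroup Ht] [InnerProductSpace ℂ Ht] [CompleteSpace Ht]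
    {d : ℕ} {tpv : MultilinearMap ℂ (fun _ : Fin d => Hs) Hd}
    {tp : (Fin d → Hs →L[ℂ] Hs) → (Hd →L[ℂ] Hd)} (htp : IsTensorD tpv tp) (K : Hd ≃ₗᵢ[ℂ] Ht)
    {ι κ : Type} (b : HilbertBasis ι ℂ Hs) (c : HilbertBasis κ ℂ Ht)
    {T : Fin d → Hs →L[ℂ] Hs} (hT : ∀ j, (T j).IsPositive) :
    ennTrace c (conjK K (tp T)) = ∏ j, ennTrace b (T j) := by
  rw [ennTrace_conjK, ← c.coe_map K.symm,
    ennTrace_eq_of_isPositive _ (htp.tensorBasis b) (htp.isPositive_tp hT), htp.coe_tensorBasis,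
    htp.ennTrace_tp b hT]

theorem trB_sum_eq_toReal {E : Type} [NormedAddCommGroup E] [InnerProductSpace ℂ E] {ι P : Type}
    (b : ι → E) (s : Finset P) {T : P → E →L[ℂ] E} (hT : ∀ p ∈ s, (T p).IsPositive) :
    trB b (∑ p ∈ s, T p) = (∑ p ∈ s, ennTrace b (T p)).toReal := by
  rw [trB_eq_toReal_ennTrace b (ContinuousLinearMap.isPositive_sum s hT), ennTrace_sum b s hT]

def ZBasis : HilbertBasis (Finset ℕ) ℂ ℋ := HilbertBasis.ofRepr (LinearIsometryEquiv.refl ℂ ℋ)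

theorem coe_ZBasis : ⇑ZBasis = Z := by
  funext σ
  rw [← ZBasis.repr_symm_single]
  rfl

theorem isSelfAdjoint_Bop (a : ℕ → ℋ →L[ℂ] ℋ) (n : ℕ) (e : ℤ) : IsSelfAdjoint (Bop a n e) := by
  have hc : IsSelfAdjoint (2 : ℂ)⁻¹ := by simp [IsSelfAdjoint]
  have ha : IsSelfAdjoint (ContinuousLinearMap.adjoint (a n) + a n) :=
    IsSelfAdjoint.star_add_self (a n)
  unfold Bop Lop Rop
  split
  · exact hc.smul (ha.sub (.one _))
  · exact hc.smul (ha.add (.one _))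

theorem seqJ_eq_sum_pathProd (a : ℕ → ℋ →L[ℂ] ℋ) (ρ : ℤ → ℋ →L[ℂ] ℋ) (n : ℕ) (x : ℤ) :
    seqJ a ρ n x = ∑ q ∈ Fintype.piFinset (fun _ : Fin n => Lam),
      pathProd (Bop a) n q * ρ (x - ∑ i, q i) * star (pathProd (Bop a) n q) := by
  refine eq_sum_pathProd Lam (Bop a) (seqJ a ρ) (fun n y => ?_) n x
  rw [Lam, Finset.sum_pair (by decide)]
  simp only [(isSelfAdjoint_Bop a n _).star_eq]
  simp [seqJ, Jmap1, Bop]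

section Walk

variable {a : ℕ → ℋ →L[ℂ] ℋ} {d : ℕ} {Hd : Type} [NormedAddCommGroup Hd]
  [InnerProductSpace ℂ Hd] [CompleteSpace Hd] {tpv : MultilinearMap ℂ (fun _ : Fin d => ℋ) Hd}
  {tp : (Fin d → ℋ →L[ℂ] ℋ) → (Hd →L[ℂ] Hd)} (K : Hd ≃ₗᵢ[ℂ] ℋ)

theorem star_Cop (htp : IsTensorD tpv tp) (n : ℕ) (v : Fin d → ℤ) :
    star (Cop a tp K n v) = Cop a tp K n v := by
  simp only [Cop, conjK_eq_conjStarAlgEquiv_s13, ← map_star, htp.star_tp,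
    (isSelfAdjoint_Bop a n _).star_eq]

theorem pathProd_Cop (htp : IsTensorD tpv tp) (n : ℕ) (P : Fin n → Fin d → ℤ) :
    pathProd (Cop a tp K) n P = conjK K (tp fun j => pathProd (Bop a) n fun i => P i j) := by
  induction n with
  | zero => simp [pathProd, htp.tp_one, conjK_eq_conjStarAlgEquiv_s13]
  | succ n ih =>
    rw [pathProd, ih, Cop, conjK_eq_conjStarAlgEquiv_s13, ← map_mul, htp.tp_mul]
    rfl

theorem eq_sum_conjK_tp_pathProd (htp : IsTensorD tpv tp) (ρ : Fin d → ℤ → ℋ →L[ℂ] ℋ)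
    (ω : ℕ → (Fin d → ℤ) → ℋ →L[ℂ] ℋ) (hev : ∀ n : ℕ, ω (n + 1) = JmapD a tp K n (ω n))
    (hinit : ∀ x : Fin d → ℤ, ω 0 x = conjK K (tp fun j => ρ j (x j))) (n : ℕ) (x : Fin d → ℤ) :
    ω n x = ∑ P ∈ Fintype.piFinset (fun _ : Fin n => LamD d), conjK K (tp fun j =>
      pathProd (Bop a) n (fun i => P i j) * ρ j (x j - ∑ i, P i j)
        * star (pathProd (Bop a) n fun i => P i j)) := by
  rw [eq_sum_pathProd (LamD d) (Cop a tp K) ω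
    (fun n y => by simp only [hev, JmapD, star_Cop K htp]) n x]
  refine Finset.sum_congr rfl fun P _ => ?_
  simp only [pathProd_Cop K htp, hinit, conjK_eq_conjStarAlgEquiv_s13, ← map_star, ← map_mul,
    htp.star_tp, htp.tp_mul, Pi.sub_apply, Finset.sum_apply]

end Walk

theorem stmt13_general (a : ℕ → ℋ →L[ℂ] ℋ)
    (d : ℕ)
    (Hd : Type) [NormedAddCommGroup Hd] [InnerProductSpace ℂ Hd] [CompleteSpace Hd]
    (tpv : MultilinearMap ℂ (fun _ : Fin d => ℋ) Hd)
    (tp : (Fin d → ℋ →L[ℂ] ℋ) → (Hd →L[ℂ] Hd))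
    (htp : IsTensorD tpv tp)
    (K : Hd ≃ₗᵢ[ℂ] ℋ)
    (ρ : Fin d → ℤ → ℋ →L[ℂ] ℋ) (hρ : ∀ j, IsNucleusOn Z (ρ j))
    (ω : ℕ → (Fin d → ℤ) → ℋ →L[ℂ] ℋ)
    (hev : ∀ n : ℕ, ω (n + 1) = JmapD a tp K n (ω n))
    (hinit : ∀ x : Fin d → ℤ, ω 0 x = conjK K (tp fun j => ρ j (x j))) :
    ∀ n : ℕ, 1 ≤ n → ∀ x : Fin d → ℤ,
      trH (ω n x) = ∏ j : Fin d, trH (seqJ a (ρ j) n (x j)) := by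
  intro n _ x
  set term : Fin d → (Fin n → ℤ) → ℋ →L[ℂ] ℋ := fun j q =>
    pathProd (Bop a) n q * ρ j (x j - ∑ i, q i) * star (pathProd (Bop a) n q)
  have hterm : ∀ j q, (term j q).IsPositive := fun j q => ((hρ j).1 _).conj_adjoint _
  calc trH (ω n x)
      = (∑ P ∈ Fintype.piFinset (fun _ : Fin n => LamD d),
          ∏ j, ennTrace Z (term j fun i => P i j)).toReal := by
        rw [eq_sum_conjK_tp_pathProd K htp ρ ω hev hinit, trH, trB_sum_eq_toReal _ _ fun P _ =>
          isPositive_conjK K (htp.isPositive_tp fun j => hterm j _), ← coe_ZBasis]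
        simp only [htp.ennTrace_conjK_tp K ZBasis ZBasis fun j => hterm j _]
    _ = ∏ j, trH (seqJ a (ρ j) n (x j)) := by
        rw [LamD, Finset.sum_piFinset_prod_transpose Lam fun j q => ennTrace Z (term j q),
          ENNReal.toReal_prod]
        refine Finset.prod_congr rfl fun j _ => ?_
        rw [trH, seqJ_eq_sum_pathProd]
        exact (trB_sum_eq_toReal _ _ fun q _ => hterm j q).symm

/-- If the initial nucleus factorizes through 1-dimensional nucleuses `ρ_j⁽⁰⁾`, then at every
time `n ≥ 1` the probability distribution of the walk factorizes:
`Tr[ω⁽ⁿ⁾(x)] = ∏_j Tr[ρ_j⁽ⁿ⁾(x_j)]` with `ρ_j⁽ⁿ⁾ = (𝔍_{n-1} ∘ ⋯ ∘ 𝔍_0) ρ_j⁽⁰⁾`. -/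
theorem stmt13 (a : ℕ → ℋ →L[ℂ] ℋ) (ha : QBN a)
    (d : ℕ) (hd : 2 ≤ d)
    (Hd : Type) [NormedAddCommGroup Hd] [InnerProductSpace ℂ Hd] [CompleteSpace Hd]
    (tpv : MultilinearMap ℂ (fun _ : Fin d => ℋ) Hd)
    (tp : (Fin d → ℋ →L[ℂ] ℋ) → (Hd →L[ℂ] Hd))
    (htp : IsTensorD tpv tp)
    (K : Hd ≃ₗᵢ[ℂ] ℋ)
    (ρ : Fin d → ℤ → ℋ →L[ℂ] ℋ) (hρ : ∀ j, IsNucleusOn Z (ρ j))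
    (ω : ℕ → (Fin d → ℤ) → ℋ →L[ℂ] ℋ)
    (hev : ∀ n : ℕ, ω (n + 1) = JmapD a tp K n (ω n))
    (hinit : ∀ x : Fin d → ℤ, ω 0 x = conjK K (tp fun j => ρ j (x j))) :
    ∀ n : ℕ, 1 ≤ n → ∀ x : Fin d → ℤ,
      trH (ω n x) = ∏ j : Fin d, trH (seqJ a (ρ j) n (x j)) :=
  stmt13_general a d Hd tpv tp htp K ρ hρ ω hev hinit
end
end
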